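/- Let β be a totally real cubic Perron number that is not a Pisot number. If β^m is a Parry number for some integer m ≥ 1, then m is odd. Consequently, the Parry order of β is either 0 or an odd number. -/

import Mathlib

/-!
If `β ^ m` is a Parry number, the eventually periodic orbit of `1` under `T_{β^m}` gives an
integer polynomial `Q` with `Q(β ^ m) = 0` whose only real root above `1` is `β ^ m`: at any root
`t > 1` the truncated digit series `1 - ∑ d_k t^{-(k+1)}` tends to `0` along multiples of the
period, while the series is strictly monotone in `t⁻¹` because `d_0 ≥ 1`.
A totally real Perron number that is not Pisot has a real conjugate `γ` with `1 < |γ| < β`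
(`|γ| = 1` would make `γ = ±1` a rational conjugate). As `Q(X ^ m)` vanishes at `β`, it vanishes
at `γ`, so for even `m` the number `γ ^ m = |γ| ^ m > 1` would be a second root of `Q` above `1`.
-/

/-- The β-transformation `x ↦ βx - ⌊βx⌋`. -/
noncomputable def betaT (β : ℝ) (x : ℝ) : ℝ := β * x - ⌊β * x⌋

/-- `β` is a Parry number: `β > 1` and the forward orbit of `1` under the
β-transformation is finite. -/
def IsParry (β : ℝ) : Prop :=
  1 < β ∧ Set.Finite {x : ℝ | ∃ n : ℕ, 1 ≤ n ∧ (betaT β)^[n] 1 = x}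

/-- `β` is a simple Parry number: Parry, and the orbit of `1` hits `0`. -/
def IsSimpleParry (β : ℝ) : Prop :=
  IsParry β ∧ ∃ n : ℕ, 1 ≤ n ∧ (betaT β)^[n] 1 = 0

/-- `β` is a Perron number: a real algebraic integer `β > 1` all of whose Galois
conjugates other than `β` itself have complex absolute value `< β`. -/
def IsPerron (β : ℝ) : Prop :=
  1 < β ∧ IsIntegral ℤ β ∧
    ∀ z : ℂ, Polynomial.aeval z (minpoly ℚ β) = 0 → z ≠ (β : ℂ) → ‖z‖ < β

/-- `β` is a Pisot number. -/
def IsPisot (β : ℝ) : Prop :=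
  1 < β ∧ IsIntegral ℤ β ∧
    ∀ z : ℂ, Polynomial.aeval z (minpoly ℚ β) = 0 → z ≠ (β : ℂ) → ‖z‖ < 1

/-- `β` is a Salem number. -/
def IsSalem (β : ℝ) : Prop :=
  1 < β ∧ IsIntegral ℤ β ∧
    (∀ z : ℂ, Polynomial.aeval z (minpoly ℚ β) = 0 → z ≠ (β : ℂ) → ‖z‖ ≤ 1) ∧
    (∃ z : ℂ, Polynomial.aeval z (minpoly ℚ β) = 0 ∧ ‖z‖ = 1)

/-- `β` has Parry order exactly `n`: if `n ≥ 1` then `β ^ n` is Parry, and no higher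
power of `β` is Parry. -/
def HasParryOrder (β : ℝ) (n : ℕ) : Prop :=
  (1 ≤ n → IsParry (β ^ n)) ∧ ∀ k : ℕ, n < k → ¬ IsParry (β ^ k)

/-- Mahler measure of an algebraic number `β`: product of `max 1 |α|` over the complex
roots `α` of the minimal polynomial of `β` over `ℚ`. -/
noncomputable def mahlerMeasureOf (β : ℝ) : ℝ :=
  (((minpoly ℚ β).map (algebraMap ℚ ℂ)).roots.map (fun z => max 1 (‖z‖))).prod

open Polynomial Finset Filter Topology

/-- `digitPoly d N = X ^ N - ∑ k < N, d k * X ^ (N - 1 - k)`; with the β-digits of `1` it evaluates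
at `β` to `T_β^N(1)`. -/
noncomputable def digitPoly (d : ℕ → ℤ) : ℕ → ℤ[X]
  | 0 => 1
  | N + 1 => X * digitPoly d N - C (d N)

noncomputable def digitSum (d : ℕ → ℤ) (r : ℝ) (N : ℕ) : ℝ :=
  ∑ k ∈ range N, (d k : ℝ) * r ^ (k + 1)

section DigitPoly

variable (d : ℕ → ℤ)

lemma digitSum_succ (r : ℝ) (N : ℕ) :
    digitSum d r (N + 1) = digitSum d r N + d N * r ^ (N + 1) :=
  sum_range_succ _ _

lemma aeval_digitPoly_succ (t : ℝ) (N : ℕ) :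
    aeval t (digitPoly d (N + 1)) = t * aeval t (digitPoly d N) - d N := by
  simp [digitPoly]

lemma aeval_digitPoly_eq_pow_mul {t : ℝ} (ht : t ≠ 0) (N : ℕ) :
    aeval t (digitPoly d N) = t ^ N * (1 - digitSum d t⁻¹ N) := by
  induction N with
  | zero => simp [digitPoly, digitSum]
  | succ N ih =>
    have hpow : t ^ (N + 1) * t⁻¹ ^ (N + 1) = 1 := by rw [← mul_pow, mul_inv_cancel₀ ht, one_pow]
    rw [aeval_digitPoly_succ, ih, digitSum_succ]
    linear_combination (d N : ℝ) * hpow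

lemma abs_sub_le_abs_digitSum_sub (hd0 : 1 ≤ d 0) (hd : ∀ k, 0 ≤ d k) {a b : ℝ}
    (ha : 0 ≤ a) (hb : 0 ≤ b) {N : ℕ} (hN : 1 ≤ N) :
    |a - b| ≤ |digitSum d a N - digitSum d b N| := by
  wlog hab : a ≤ b generalizing a b
  · rw [abs_sub_comm, abs_sub_comm (digitSum d a N)]
    exact this hb ha (le_of_not_ge hab)
  have hterm : ∀ k ∈ range N, 0 ≤ (d k : ℝ) * (b ^ (k + 1) - a ^ (k + 1)) := fun k _ =>
    mul_nonneg (by exact_mod_cast hd k) (sub_nonneg.mpr (pow_le_pow_left₀ ha hab _))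
  have hfirst : b - a ≤ (d 0 : ℝ) * (b ^ 1 - a ^ 1) := by
    rw [pow_one, pow_one]
    exact le_mul_of_one_le_left (sub_nonneg.mpr hab) (by exact_mod_cast hd0)
  calc |a - b| = b - a := by rw [abs_sub_comm, abs_of_nonneg (sub_nonneg.mpr hab)]
    _ ≤ digitSum d b N - digitSum d a N := by
      rw [digitSum, digitSum, ← sum_sub_distrib]
      simp_rw [← mul_sub]
      exact hfirst.trans (single_le_sum hterm (mem_range.mpr hN))
    _ ≤ |digitSum d a N - digitSum d b N| := by rw [abs_sub_comm]; exact le_abs_self _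

lemma tendsto_one_sub_digitSum {t : ℝ} (ht : 1 < t) {N : ℕ → ℕ} (hN : Tendsto N atTop atTop)
    {C : ℝ} (hC : ∀ k, |aeval t (digitPoly d (N k))| ≤ C) :
    Tendsto (fun k => 1 - digitSum d t⁻¹ (N k)) atTop (𝓝 0) := by
  have ht0 : t ≠ 0 := by positivity
  have hpow : Tendsto (fun k => t⁻¹ ^ N k * C) atTop (𝓝 0) := by
    simpa using ((tendsto_pow_atTop_nhds_zero_of_lt_one (by positivity)
      (inv_lt_one_of_one_lt₀ ht)).comp hN).mul_const C
  refine squeeze_zero_norm (fun k => ?_) hpow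
  have h := aeval_digitPoly_eq_pow_mul d ht0 (N k)
  rw [← inv_mul_eq_iff_eq_mul₀ (pow_ne_zero _ ht0)] at h
  rw [Real.norm_eq_abs, ← h, abs_mul, inv_pow, abs_of_pos (by positivity)]
  exact mul_le_mul_of_nonneg_left (hC k) (by positivity)

lemma eq_of_bounded_aeval_digitPoly (hd0 : 1 ≤ d 0) (hd : ∀ k, 0 ≤ d k) {s t : ℝ}
    (hs : 1 < s) (ht : 1 < t) {N : ℕ → ℕ} (hN : Tendsto N atTop atTop) {C D : ℝ}
    (hsC : ∀ k, |aeval s (digitPoly d (N k))| ≤ C)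
    (htD : ∀ k, |aeval t (digitPoly d (N k))| ≤ D) : s = t := by
  have hdiff : Tendsto (fun k => |digitSum d s⁻¹ (N k) - digitSum d t⁻¹ (N k)|) atTop (𝓝 0) := by
    simpa using ((tendsto_one_sub_digitSum d ht hN htD).sub
      (tendsto_one_sub_digitSum d hs hN hsC)).abs
  have hle : |s⁻¹ - t⁻¹| ≤ 0 :=
    ge_of_tendsto hdiff ((hN.eventually_ge_atTop 1).mono fun k hk =>
      abs_sub_le_abs_digitSum_sub d hd0 hd (by positivity) (by positivity) hk)
  exact inv_inj.mp (sub_eq_zero.mp (abs_nonpos_iff.mp hle))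

lemma aeval_digitPoly_add_mul_eq {p q : ℕ} (hd : ∀ n, p ≤ n → d (n + q) = d n) {t : ℝ}
    (ht : aeval t (digitPoly d (p + q)) = aeval t (digitPoly d p)) (k : ℕ) :
    aeval t (digitPoly d (p + k * q)) = aeval t (digitPoly d p) := by
  have hper : ∀ n, p ≤ n → aeval t (digitPoly d (n + q)) = aeval t (digitPoly d n) := by
    intro n hn
    induction n, hn using Nat.le_induction with
    | base => exact ht
    | succ n hn ih => rw [Nat.add_right_comm, aeval_digitPoly_succ, ih, hd n hn, aeval_digitPoly_succ]
  induction k with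
  | zero => simp
  | succ k ih => rw [Nat.succ_mul, ← add_assoc, hper _ (by omega), ih]

end DigitPoly

section BetaTransformation

variable (α : ℝ)

noncomputable def betaDigit (n : ℕ) : ℤ := ⌊α * (betaT α)^[n] 1⌋

lemma betaT_iterate_one_mem_Icc (n : ℕ) : (betaT α)^[n] 1 ∈ Set.Icc (0 : ℝ) 1 := by
  cases n with
  | zero => simp
  | succ n =>
    rw [Function.iterate_succ_apply']
    exact ⟨Int.fract_nonneg _, (Int.fract_lt_one _).le⟩

lemma aeval_digitPoly_betaDigit (N : ℕ) :
    aeval α (digitPoly (betaDigit α) N) = (betaT α)^[N] 1 := by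
  induction N with
  | zero => simp [digitPoly]
  | succ N ih => rw [aeval_digitPoly_succ, ih, Function.iterate_succ_apply', betaDigit, betaT]

variable {α}

lemma betaDigit_nonneg (hα : 0 ≤ α) (n : ℕ) : 0 ≤ betaDigit α n :=
  Int.floor_nonneg.mpr (mul_nonneg hα (betaT_iterate_one_mem_Icc α n).1)

lemma one_le_betaDigit_zero (hα : 1 ≤ α) : 1 ≤ betaDigit α 0 :=
  Int.le_floor.mpr (by simpa using hα)

lemma IsParry.exists_iterate_add_eq (h : IsParry α) :
    ∃ p q : ℕ, 1 ≤ q ∧ ∀ n, p ≤ n → (betaT α)^[n + q] 1 = (betaT α)^[n] 1 := by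
  obtain ⟨a, b, hab, heq⟩ := h.2.exists_lt_map_eq_of_forall_mem
    (f := fun n => (betaT α)^[n + 1] 1) fun n => (⟨n + 1, by omega, rfl⟩ : ∃ _, _)
  refine ⟨a + 1, b - a, by omega, fun n hn => ?_⟩
  obtain ⟨j, rfl⟩ := Nat.exists_eq_add_of_le hn
  calc (betaT α)^[a + 1 + j + (b - a)] 1 = (betaT α)^[j] ((betaT α)^[b + 1] 1) := by
        rw [← Function.iterate_add_apply]; congr 1; omega
    _ = (betaT α)^[a + 1 + j] 1 := by
        rw [← heq, ← Function.iterate_add_apply]; congr 1; omega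

end BetaTransformation

theorem IsParry.exists_aeval_eq_zero_unique {α : ℝ} (h : IsParry α) :
    ∃ Q : ℤ[X], aeval α Q = 0 ∧ ∀ t : ℝ, 1 < t → aeval t Q = 0 → t = α := by
  obtain ⟨p, q, hq, hper⟩ := h.exists_iterate_add_eq
  have hdigit : ∀ n, p ≤ n → betaDigit α (n + q) = betaDigit α n := fun n hn => by
    rw [betaDigit, betaDigit, hper n hn]
  refine ⟨digitPoly (betaDigit α) (p + q) - digitPoly (betaDigit α) p, ?_, fun t ht htQ => ?_⟩
  · rw [map_sub, aeval_digitPoly_betaDigit, aeval_digitPoly_betaDigit, hper p le_rfl, sub_self]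
  rw [map_sub, sub_eq_zero] at htQ
  have hN : Tendsto (fun k => p + k * q) atTop atTop :=
    tendsto_atTop_mono (fun k => le_add_left (Nat.le_mul_of_pos_right k hq)) tendsto_id
  refine eq_of_bounded_aeval_digitPoly (betaDigit α) (one_le_betaDigit_zero h.1.le)
    (betaDigit_nonneg (zero_le_one.trans h.1.le)) ht h.1 hN (C := |aeval t (digitPoly (betaDigit α) p)|)
    (D := 1) (fun k => ?_) (fun k => ?_)
  · rw [aeval_digitPoly_add_mul_eq _ hdigit htQ]
  · rw [aeval_digitPoly_betaDigit, abs_le]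
    obtain ⟨h0, h1⟩ := betaT_iterate_one_mem_Icc α (p + k * q)
    constructor <;> linarith

lemma aeval_eq_zero_of_aeval_minpoly_eq_zero {K : Type*} [Field K] [CharZero K] {β γ : K}
    (hγ : aeval γ (minpoly ℚ β) = 0) {P : ℤ[X]} (hP : aeval β P = 0) : aeval γ P = 0 := by
  obtain ⟨R, hR⟩ := minpoly.dvd ℚ β (p := P.map (algebraMap ℤ ℚ)) (by rwa [aeval_map_algebraMap])
  rw [← aeval_map_algebraMap ℚ, hR, map_mul, hγ, zero_mul]

lemma eq_algebraMap_of_aeval_minpoly_eq_zero {F L : Type*} [Field F] [Field L] [Algebra F L]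
    {β : L} (hβ : IsIntegral F β) {c : F} (hc : aeval (algebraMap F L c) (minpoly F β) = 0) :
    β = algebraMap F L c := by
  have hmin := minpoly.eq_of_irreducible_of_monic (minpoly.irreducible hβ) hc (minpoly.monic hβ)
  have hβroot := minpoly.aeval F β
  rwa [hmin, minpoly.eq_X_sub_C, map_sub, aeval_X, aeval_C, sub_eq_zero] at hβroot

lemma IsPerron.exists_real_conj_one_lt_abs_lt {β : ℝ} (hβ : IsPerron β)
    (hreal : ∀ z : ℂ, aeval z (minpoly ℚ β) = 0 → z.im = 0) (hnp : ¬ IsPisot β) :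
    ∃ γ : ℝ, aeval γ (minpoly ℚ β) = 0 ∧ 1 < |γ| ∧ |γ| < β := by
  obtain ⟨hβ1, hβint, hconj⟩ := hβ
  obtain ⟨z, hz, hzβ, hz1⟩ : ∃ z : ℂ, aeval z (minpoly ℚ β) = 0 ∧ z ≠ β ∧ 1 ≤ ‖z‖ := by
    by_contra! h
    exact hnp ⟨hβ1, hβint, h⟩
  obtain ⟨γ, rfl⟩ : ∃ γ : ℝ, (γ : ℂ) = z := ⟨z.re, Complex.ext rfl (hreal z hz).symm⟩
  have hγ : aeval γ (minpoly ℚ β) = 0 := by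
    rwa [← Complex.ofReal_eq_zero, ← Complex.coe_algebraMap, ← aeval_algebraMap_apply]
  rw [Complex.norm_real, Real.norm_eq_abs] at hz1
  refine ⟨γ, hγ, hz1.lt_of_ne fun habs => ?_, by simpa using hconj γ hz hzβ⟩
  have hβrat := hβint.tower_top (A := ℚ)
  rcases abs_eq zero_le_one |>.mp habs.symm with rfl | rfl
  · have := eq_algebraMap_of_aeval_minpoly_eq_zero hβrat (c := 1) (by simpa using hγ)
    norm_num [this] at hβ1
  · have := eq_algebraMap_of_aeval_minpoly_eq_zero hβrat (c := -1) (by simpa using hγ)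
    norm_num [this] at hβ1

theorem totally_real_cubic_parry_order_odd_general (β : ℝ) (hβ : IsPerron β)
    (hreal : ∀ z : ℂ, Polynomial.aeval z (minpoly ℚ β) = 0 → z.im = 0)
    (hnp : ¬ IsPisot β) :
    (∀ m : ℕ, 1 ≤ m → IsParry (β ^ m) → Odd m) ∧
    (∀ n : ℕ, HasParryOrder β n → n = 0 ∨ Odd n) := by
  have parry_odd : ∀ m : ℕ, 1 ≤ m → IsParry (β ^ m) → Odd m := by
    intro m hm hparry
    obtain ⟨γ, hγ, hγ1, hγβ⟩ := hβ.exists_real_conj_one_lt_abs_lt hreal hnp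
    obtain ⟨Q, hQβ, hQuniq⟩ := hparry.exists_aeval_eq_zero_unique
    by_contra hodd
    have hpow_abs : |γ| ^ m = γ ^ m := (Nat.not_odd_iff_even.mp hodd).pow_abs γ
    have hQγ : aeval (γ ^ m) Q = 0 := by
      simpa [aeval_comp] using aeval_eq_zero_of_aeval_minpoly_eq_zero hγ (P := Q.comp (X ^ m))
        (by simpa [aeval_comp] using hQβ)
    have hγβm := hQuniq (γ ^ m) (hpow_abs ▸ one_lt_pow₀ hγ1 (by omega)) hQγ
    rw [← hpow_abs] at hγβm
    exact (pow_lt_pow_left₀ hγβ (abs_nonneg γ) (by omega)).ne hγβm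
  exact ⟨parry_odd, fun n hn =>
    (Nat.eq_zero_or_pos n).imp_right fun hpos => parry_odd n hpos (hn.1 hpos)⟩

/-- For a totally real cubic non-Pisot Perron number, every Parry power has odd
exponent; consequently its Parry order is `0` or odd. -/
theorem totally_real_cubic_parry_order_odd (β : ℝ) (hβ : IsPerron β)
    (hdeg : (minpoly ℚ β).natDegree = 3)
    (hreal : ∀ z : ℂ, Polynomial.aeval z (minpoly ℚ β) = 0 → z.im = 0)
    (hnp : ¬ IsPisot β) :
    (∀ m : ℕ, 1 ≤ m → IsParry (β ^ m) → Odd m) ∧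
    (∀ n : ℕ, HasParryOrder β n → n = 0 ∨ Odd n) :=
  totally_real_cubic_parry_order_odd_general β hβ hreal hnp
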